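/- Let (Ω, μ) be a probability space, let κ, m, N, n, J be natural numbers with 1 ≤ κ ≤ m ≤ N, 1 ≤ n, 1 ≤ J, and let α ≥ 0 be a real number. Let X : Fin n → Ω → ℕ be a family of random variables that are mutually independent and each distributed as a Poisson distribution with rate α·κ (modeling the number of outliers clustered to each of the n inlier seeds), and let A : Fin J → Set Ω be mutually independent measurable events each with μ(A j) = (m choose κ)/(N choose κ) (modeling the event that one RANSAC sample of size κ drawn from N correspondences with m inliers consists only of inliers). If α ≤ U(m/N, κ, J, n), where U(p, κ, J, n) := −(1/κ)·log(1 − (1 − p^κ)^(J/n)) with J/n a real exponent, then μ(⋃ i, {ω | X i ω = 0}) ≥ μ(⋃ j, A j); that is, the probability that at least one seed's hypothetical-inlier set contains no outlier is at least the probability that at least one of the J RANSAC samples is an all-inlier subset. -/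

import Mathlib

/-!
Both probabilities are computed through the complementary event. The chance that no seed is
outlier-free is `(1 - e^{-ακ})^n`, and the chance that no RANSAC sample is all-inlier is
`(1 - q)^J` with `q = C(m,κ)/C(N,κ)`. The threshold `α ≤ U(p, κ, J, n)` gives
`(1 - e^{-ακ})^n ≤ (1 - p^κ)^J`, and `q ≤ p^κ` because drawing without replacement makes
every further draw less likely to be an inlier: `(m - i)/(N - i) ≤ m/N`.
-/

open MeasureTheory ProbabilityTheory ENNReal

/-- The threshold `U(p, κ, J, n) = -(1/κ) · log(1 - (1 - p^κ)^(J/n))`,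
where the exponent `J/n` is a real exponent. -/
noncomputable def U (p : ℝ) (κ J n : ℕ) : ℝ :=
  -(1 / (κ : ℝ)) * Real.log (1 - (1 - p ^ κ) ^ ((J : ℝ) / (n : ℝ)))

open Real NNReal

theorem Nat.choose_mul_pow_le_choose_mul_pow {m N : ℕ} (κ : ℕ) (hmN : m ≤ N) :
    m.choose κ * N ^ κ ≤ N.choose κ * m ^ κ := by
  have hdesc : m.descFactorial κ * N ^ κ ≤ N.descFactorial κ * m ^ κ := by
    rw [Nat.descFactorial_eq_prod_range, Nat.descFactorial_eq_prod_range, Finset.pow_eq_prod_const,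
      Finset.pow_eq_prod_const, ← Finset.prod_mul_distrib, ← Finset.prod_mul_distrib]
    refine Finset.prod_le_prod' fun i _ => ?_
    calc (m - i) * N = N * m - i * N := by rw [Nat.sub_mul, Nat.mul_comm]
      _ ≤ N * m - i * m := Nat.sub_le_sub_left (Nat.mul_le_mul_left i hmN) _
      _ = (N - i) * m := (Nat.sub_mul _ _ _).symm
  rw [Nat.descFactorial_eq_factorial_mul_choose, Nat.descFactorial_eq_factorial_mul_choose,
    Nat.mul_assoc, Nat.mul_assoc] at hdesc
  exact Nat.le_of_mul_le_mul_left hdesc (Nat.factorial_pos κ)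

theorem choose_div_choose_le_ofReal_div_pow {κ m N : ℕ} (hκN : κ ≤ N) (hmN : m ≤ N) :
    (m.choose κ : ℝ≥0∞) / N.choose κ ≤ ENNReal.ofReal (((m : ℝ) / N) ^ κ) := by
  have hchoose : (0 : ℝ) < N.choose κ := by exact_mod_cast Nat.choose_pos hκN
  rw [← ENNReal.ofReal_natCast, ← ENNReal.ofReal_natCast, ← ENNReal.ofReal_div_of_pos hchoose]
  refine ENNReal.ofReal_le_ofReal ?_
  rcases N.eq_zero_or_pos with rfl | hN
  · simp_all
  rw [div_pow, div_le_div_iff₀ hchoose (by positivity), mul_comm ((m : ℝ) ^ κ)]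
  exact_mod_cast Nat.choose_mul_pow_le_choose_mul_pow κ hmN

theorem one_sub_exp_neg_le_of_le_neg_log {c t : ℝ} (h : t ≤ -Real.log (1 - c)) :
    1 - exp (-t) ≤ c := by
  rcases lt_or_ge c 1 with hc | hc
  · have : 1 - c ≤ exp (-t) := by
      rw [← exp_log (sub_pos.2 hc)]
      exact exp_le_exp.2 (by linarith)
    linarith
  · linarith [exp_pos (-t)]

theorem one_sub_exp_neg_pow_le {ρ t : ℝ} {n J : ℕ} (hρ : 0 ≤ ρ) (hn : n ≠ 0) (ht : 0 ≤ t)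
    (h : t ≤ -Real.log (1 - ρ ^ ((J : ℝ) / n))) :
    (1 - exp (-t)) ^ n ≤ ρ ^ J :=
  calc (1 - exp (-t)) ^ n ≤ (ρ ^ ((J : ℝ) / n)) ^ n :=
        pow_le_pow_left₀ (sub_nonneg.2 (exp_le_one_iff.2 (neg_nonpos.2 ht)))
          (one_sub_exp_neg_le_of_le_neg_log h) n
    _ = ρ ^ J := by
        rw [← Real.rpow_natCast, ← rpow_mul hρ, div_mul_cancel₀ _ (Nat.cast_ne_zero.2 hn),
          Real.rpow_natCast]

theorem toNNReal_mul_le_neg_log_of_le_U {α p : ℝ} {κ J n : ℕ} (hp0 : 0 ≤ p) (hp1 : p ≤ 1)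
    (h : α ≤ U p κ J n) :
    ((α * κ).toNNReal : ℝ) ≤ -Real.log (1 - (1 - p ^ κ) ^ ((J : ℝ) / n)) := by
  have hρ : 0 ≤ 1 - p ^ κ := sub_nonneg.2 (pow_le_one₀ hp0 hp1)
  have hρ1 : 1 - p ^ κ ≤ 1 := sub_le_self _ (pow_nonneg hp0 κ)
  have hc0 : 0 ≤ (1 - p ^ κ) ^ ((J : ℝ) / n) := rpow_nonneg hρ _
  have hc1 : (1 - p ^ κ) ^ ((J : ℝ) / n) ≤ 1 := rpow_le_one hρ hρ1 (by positivity)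
  have hL : 0 ≤ -Real.log (1 - (1 - p ^ κ) ^ ((J : ℝ) / n)) :=
    neg_nonneg.2 (log_nonpos (by linarith) (by linarith))
  rw [Real.coe_toNNReal', max_le_iff]
  refine ⟨mul_le_of_le_div₀ hL κ.cast_nonneg (h.trans_eq ?_), hL⟩
  rw [U]
  ring

theorem ENNReal.one_sub_ofReal_pow {x : ℝ} (hx0 : 0 ≤ x) (hx1 : x ≤ 1) (n : ℕ) :
    (1 - ENNReal.ofReal x) ^ n = ENNReal.ofReal ((1 - x) ^ n) := by
  rw [ENNReal.ofReal_pow (sub_nonneg.2 hx1), ENNReal.ofReal_sub _ hx0, ENNReal.ofReal_one]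

theorem ProbabilityTheory.poissonMeasure_singleton_zero (r : ℝ≥0) :
    poissonMeasure r {0} = ENNReal.ofReal (exp (-r)) := by
  simp [poissonMeasure_singleton]

theorem ProbabilityTheory.iIndepFun.iIndepSet_preimage {Ω ι : Type*} [MeasurableSpace Ω]
    {μ : Measure Ω} {β : ι → Type*} {mβ : ∀ i, MeasurableSpace (β i)} {f : ∀ i, Ω → β i}
    (hf : iIndepFun f μ) (hmeas : ∀ i, Measurable (f i)) {t : ∀ i, Set (β i)}
    (ht : ∀ i, MeasurableSet (t i)) :
    iIndepSet (fun i => f i ⁻¹' t i) μ :=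
  (iIndepSet_iff_meas_biInter fun i => hmeas i (ht i)).2 fun _ =>
    hf.meas_biInter fun i _ => ⟨t i, ht i, rfl⟩

theorem ProbabilityTheory.iIndepSet.measure_iUnion {Ω ι : Type*} [MeasurableSpace Ω]
    {μ : Measure Ω} [Fintype ι] {s : ι → Set Ω} (h : iIndepSet s μ)
    (hs : ∀ i, MeasurableSet (s i)) :
    μ (⋃ i, s i) = 1 - ∏ i, (1 - μ (s i)) := by
  have := h.isProbabilityMeasure
  have hcompl : μ (⋂ i, (s i)ᶜ) = ∏ i, μ (s i)ᶜ :=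
    ((iIndepSet_iff_iIndep s μ).1 h).meas_iInter fun _ =>
      (MeasurableSpace.measurableSet_generateFrom (Set.mem_singleton _)).compl
  rw [← ENNReal.sub_sub_cancel one_ne_top prob_le_one, ← prob_compl_eq_one_sub (.iUnion hs),
    Set.compl_iUnion, hcompl]
  simp_rw [prob_compl_eq_one_sub (hs _)]

theorem voting_beats_ransac_general {Ω : Type*} [MeasurableSpace Ω] (μ : Measure Ω)
    (κ m N n J : ℕ)
    (hκm : κ ≤ m) (hmN : m ≤ N) (hn : 1 ≤ n)
    (α : ℝ)
    (X : Fin n → Ω → ℕ) (hXmeas : ∀ i, Measurable (X i))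
    (hXindep : iIndepFun X μ)
    (hXdist : ∀ i, Measure.map (X i) μ = poissonMeasure (α * κ).toNNReal)
    (A : Fin J → Set Ω) (hAmeas : ∀ j, MeasurableSet (A j))
    (hAindep : iIndepSet A μ)
    (hAprob : ∀ j, μ (A j) = (m.choose κ : ℝ≥0∞) / (N.choose κ : ℝ≥0∞))
    (hαU : α ≤ U ((m : ℝ) / (N : ℝ)) κ J n) :
    μ (⋃ j, A j) ≤ μ (⋃ i, {ω | X i ω = 0}) := by
  change μ (⋃ j, A j) ≤ μ (⋃ i, X i ⁻¹' {0})
  set p : ℝ := (m : ℝ) / N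
  set r : ℝ≥0 := (α * κ).toNNReal
  have hp0 : 0 ≤ p := by positivity
  have hp1 : p ≤ 1 := div_le_one_of_le₀ (by exact_mod_cast hmN) (Nat.cast_nonneg N)
  have hzero (i : Fin n) : μ (X i ⁻¹' {0}) = ENNReal.ofReal (exp (-r)) := by
    rw [← Measure.map_apply (hXmeas i) (measurableSet_singleton 0), hXdist i,
      poissonMeasure_singleton_zero]
  have hpκ : p ^ κ ≤ 1 := pow_le_one₀ hp0 hp1
  have hreal : (1 - exp (-r)) ^ n ≤ (1 - p ^ κ) ^ J :=
    one_sub_exp_neg_pow_le (sub_nonneg.2 hpκ) (by omega) r.coe_nonneg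
      (toNNReal_mul_le_neg_log_of_le_U hp0 hp1 hαU)
  rw [hAindep.measure_iUnion hAmeas, (hXindep.iIndepSet_preimage hXmeas fun _ =>
    measurableSet_singleton 0).measure_iUnion fun i => hXmeas i (measurableSet_singleton 0)]
  simp only [hAprob, hzero, Finset.prod_const, Finset.card_univ, Fintype.card_fin]
  refine tsub_le_tsub_left ?_ 1
  calc (1 - ENNReal.ofReal (exp (-r))) ^ n = ENNReal.ofReal ((1 - exp (-r)) ^ n) :=
        one_sub_ofReal_pow (exp_pos _).le (exp_le_one_iff.2 (neg_nonpos.2 r.coe_nonneg)) n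
    _ ≤ ENNReal.ofReal ((1 - p ^ κ) ^ J) := ENNReal.ofReal_le_ofReal hreal
    _ = (1 - ENNReal.ofReal (p ^ κ)) ^ J := (one_sub_ofReal_pow (pow_nonneg hp0 κ) hpκ J).symm
    _ ≤ _ := pow_le_pow_left₀ zero_le
        (tsub_le_tsub_left (choose_div_choose_le_ofReal_div_pow (hκm.trans hmN) hmN) 1) J

/-- **Theorem 1.** Let `1 ≤ κ ≤ m ≤ N`, `1 ≤ n`, `1 ≤ J` and `α ≥ 0`. Let
`X : Fin n → Ω → ℕ` be mutually independent random variables, each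
Poisson-distributed with rate `α·κ` (the number of outliers clustered to each
inlier seed), and let `A : Fin J → Set Ω` be mutually independent events, each
of probability `C(m,κ)/C(N,κ)` (the event that one RANSAC sample of size `κ`
from `N` correspondences with `m` inliers is all-inlier). If
`α ≤ U(m/N, κ, J, n)`, then the probability that at least one seed's
hypothetical-inlier set contains no outlier is at least the probability that at
least one of the `J` RANSAC samples is an all-inlier subset. -/
theorem voting_beats_ransac {Ω : Type*} [MeasurableSpace Ω] (μ : Measure Ω)
    [IsProbabilityMeasure μ] (κ m N n J : ℕ)
    (hκ : 1 ≤ κ) (hκm : κ ≤ m) (hmN : m ≤ N) (hn : 1 ≤ n) (hJ : 1 ≤ J)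
    (α : ℝ) (hα0 : 0 ≤ α)
    (X : Fin n → Ω → ℕ) (hXmeas : ∀ i, Measurable (X i))
    (hXindep : iIndepFun X μ)
    (hXdist : ∀ i, Measure.map (X i) μ = poissonMeasure (α * κ).toNNReal)
    (A : Fin J → Set Ω) (hAmeas : ∀ j, MeasurableSet (A j))
    (hAindep : iIndepSet A μ)
    (hAprob : ∀ j, μ (A j) = (m.choose κ : ℝ≥0∞) / (N.choose κ : ℝ≥0∞))
    (hαU : α ≤ U ((m : ℝ) / (N : ℝ)) κ J n) :
    μ (⋃ j, A j) ≤ μ (⋃ i, {ω | X i ω = 0}) :=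
  voting_beats_ransac_general μ κ m N n J hκm hmN hn α X hXmeas hXindep hXdist A hAmeas hAindep
    hAprob hαU
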